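/- Let N be a compact, connected, nonorientable surface of genus g with n boundary components with g + n ≥ 5 and g odd. Define Z_1 = C (the finite superrigid set C_1 ∪ ⋯ ∪ C_6) and, for k ≥ 2, Z_k = Z_{k−1} ∪ ⋃_{f ∈ G_2} (f(Z_{k−1}) ∪ f^{−1}(Z_{k−1})), where G_2 is the stated generating set of Mod_N. Then each Z_k is a finite superrigid set in C(N) with trivial pointwise stabilizer in Mod_N, Z_1 ⊂ Z_2 ⊂ ⋯, and ⋃_{k∈ℕ} Z_k = C(N). -/
import Mathlib


/-- Abstract data of the curve complex `C(N)` of a compact, connected, nonorientable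
surface `N` of genus `g` with `n` boundary components, together with the action of the
mapping class group `Mod_N` on it.  `Vertex` is the set of isotopy classes of nontrivial
simple closed curves, `inter` is the geometric intersection number (recall that
`inter v v = 1` iff `v` is one-sided and `inter v v = 0` iff `v` is two-sided), `MCG` is
the mapping class group (isotopy classes of self-homeomorphisms) and `act` is its action
on isotopy classes of curves. -/
structure CurveSystem : Type 1 where
  Vertex : Type
  inter : Vertex → Vertex → ℕ
  inter_symm : ∀ a b, inter a b = inter b a
  MCG : Type
  [grp : Group MCG]
  act : MCG → Vertex → Vertex
  act_one : ∀ v, act 1 v = v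
  act_mul : ∀ f g v, act (f * g) v = act f (act g v)
  act_inter : ∀ f a b, inter (act f a) (act f b) = inter a b

attribute [instance] CurveSystem.grp

namespace CurveSystem

variable (S : CurveSystem)

/-- `l` is a simplicial map on the subcomplex spanned by `A`: simplices map to simplices,
i.e. distinct disjoint vertices are sent to equal or disjoint vertices. -/
def SimplicialOn (A : Set S.Vertex) (l : S.Vertex → S.Vertex) : Prop :=
  ∀ a ∈ A, ∀ b ∈ A, a ≠ b → S.inter a b = 0 → (l a = l b ∨ S.inter (l a) (l b) = 0)

/-- `l` is superinjective on `A`: nonzero geometric intersection is preserved. -/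
def SuperinjectiveOn (A : Set S.Vertex) (l : S.Vertex → S.Vertex) : Prop :=
  ∀ a ∈ A, ∀ b ∈ A, S.inter a b ≠ 0 → S.inter (l a) (l b) ≠ 0

/-- `l` is induced on `A` by a homeomorphism of the surface. -/
def InducedOn (A : Set S.Vertex) (l : S.Vertex → S.Vertex) : Prop :=
  ∃ h : S.MCG, ∀ v ∈ A, S.act h v = l v

/-- `A` is superrigid: every superinjective simplicial map of `A` into the curve
complex is induced by a homeomorphism. -/
def Superrigid (A : Set S.Vertex) : Prop :=
  ∀ l : S.Vertex → S.Vertex, S.SimplicialOn A l → S.SuperinjectiveOn A l → S.InducedOn A l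

/-- The pointwise stabilizer of `A` in the mapping class group is trivial. -/
def TrivialPointwiseStabilizer (A : Set S.Vertex) : Prop :=
  ∀ f : S.MCG, (∀ v ∈ A, S.act f v = v) → f = 1

/-- The star of `v` in `A`: `v` together with the vertices of `A` disjoint from it. -/
def star (A : Set S.Vertex) (v : S.Vertex) : Set S.Vertex :=
  {w | w ∈ A ∧ (w = v ∨ S.inter v w = 0)}

/-- `l` is locally injective on `A`: injective on the star of every vertex. -/
def LocallyInjectiveOn (A : Set S.Vertex) (l : S.Vertex → S.Vertex) : Prop :=
  ∀ v ∈ A, Set.InjOn l (S.star A v)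

/-- `A` is rigid: every locally injective simplicial map of `A` into the curve complex
is induced by a homeomorphism. -/
def Rigid (A : Set S.Vertex) : Prop :=
  ∀ l : S.Vertex → S.Vertex, S.SimplicialOn A l → S.LocallyInjectiveOn A l → S.InducedOn A l

end CurveSystem

namespace CurveSystem

/-- The representative in `{1, …, m}` of an integer index, taken mod `m`. -/
def wrapIdx (m : ℕ) (x : ℤ) : ℕ := (((x - 1) % (m : ℤ)) + 1).toNat

/-- The Ilbira–Korkmaz finite rigid set `X = C₁`, given the curves `a i` (= `a_i`, the
one-sided curve coming from the arc `s_i`), `A i j` (= `a_{i,j}`, the one-sided curve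
from the segment joining the midpoint of `s_i` to `e_j`, for `1 ≤ i ≤ g`,
`1 ≤ j ≤ g+n`, `j ≠ i`, `j ≠ i-1 (mod g+n)`) and `B i j` (= `b_{i,j}`, the two-sided
curve from the segment joining `e_i` to `e_j`, for `2 ≤ |i-j| ≤ g+n-2`) of the
`(2g+2n)`-gon model of `N`. -/
def IKset (S : CurveSystem) (g n : ℕ) (a : ℕ → S.Vertex) (A B : ℕ → ℕ → S.Vertex) :
    Set S.Vertex :=
  (a '' Set.Icc 1 g) ∪
    {v | ∃ i j : ℕ, 1 ≤ i ∧ i ≤ g ∧ 1 ≤ j ∧ j ≤ g + n ∧ j ≠ i ∧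
      j ≠ wrapIdx (g + n) ((i : ℤ) - 1) ∧ v = A i j} ∪
    {v | ∃ i j : ℕ, 1 ≤ i ∧ i ≤ g + n ∧ 1 ≤ j ∧ j ≤ g + n ∧
      2 ≤ |(i : ℤ) - (j : ℤ)| ∧ |(i : ℤ) - (j : ℤ)| ≤ (g : ℤ) + (n : ℤ) - 2 ∧ v = B i j}

/-- The set `C₂ = {w₁, …, w_{g+n}, r₁, …, r_{g+n}}` of the paper's Figure 4. -/
def C2set (S : CurveSystem) (g n : ℕ) (w r : ℕ → S.Vertex) : Set S.Vertex :=
  w '' Set.Icc 1 (g + n) ∪ r '' Set.Icc 1 (g + n)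

end CurveSystem

namespace CurveSystem

/-- The set `C₃ = {c₁, …, c_{g-1}, d_{1,2}, …, d_{g-1,g}, u₁, …, u_{g-1}, v₁, …, v_{g-1}}`
of the paper's Figure 5 (i)–(iii), where `d i` denotes the curve `d_{i,i+1}`. -/
def C3set (S : CurveSystem) (g : ℕ) (c d u v : ℕ → S.Vertex) : Set S.Vertex :=
  c '' Set.Icc 1 (g - 1) ∪ d '' Set.Icc 1 (g - 1) ∪ u '' Set.Icc 1 (g - 1) ∪
    v '' Set.Icc 1 (g - 1)

/-- The set `C₄ = {k₁, …, k_{g-1}, p₁, …, p_{g-1}, e_{1,2}, …, e_{g-1,g}, l₂, …, l_g,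
r_{1,2}, …, r_{g-1,g}, y₂, …, y_g, s_{1,2}, …, s_{g-1,g}}` of the paper's Figure 5
(iv)–(xii), where `e i`, `r' i`, `s i` denote `e_{i,i+1}`, `r_{i,i+1}`, `s_{i,i+1}`. -/
def C4set (S : CurveSystem) (g : ℕ) (k p e l r' y s : ℕ → S.Vertex) : Set S.Vertex :=
  k '' Set.Icc 1 (g - 1) ∪ p '' Set.Icc 1 (g - 1) ∪ e '' Set.Icc 1 (g - 1) ∪
    l '' Set.Icc 2 g ∪ r' '' Set.Icc 1 (g - 1) ∪ y '' Set.Icc 2 g ∪ s '' Set.Icc 1 (g - 1)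

/-- The set `C₅`: `{l₀, l₁}` when `n ≤ 1` and `{l₁, d_{n-1}}` when `n ≥ 2`
(curves of the paper's Figures 6 (i) and 8 (vi)). -/
def C5set (S : CurveSystem) (n : ℕ) (l0 l1 dn1 : S.Vertex) : Set S.Vertex :=
  if n ≤ 1 then {l0, l1} else {l1, dn1}

/-- The set `C₆` of the curves `p_{i,j}`, `q_t`, `o_t` (`t` even) of the paper's
Figures 6–8: empty if `g ≤ 2`; for `g = 2k ≥ 4` the indices are `1 ≤ i ≤ k`,
`0 ≤ j ≤ n`, `t = 2, 4, …, 2k`, and for `g = 2k+1 ≥ 3` they are `1 ≤ i ≤ k`,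
`0 ≤ j ≤ n-1`, `t = 2, 4, …, 2k` (note `k = g / 2` in both cases). -/
def C6set (S : CurveSystem) (g n : ℕ) (p : ℕ → ℕ → S.Vertex) (q o : ℕ → S.Vertex) :
    Set S.Vertex :=
  if g ≤ 2 then ∅
  else
    {v | ∃ i j : ℕ, 1 ≤ i ∧ i ≤ g / 2 ∧ (if Even g then j ≤ n else j + 1 ≤ n) ∧
        v = p i j} ∪
      {v | ∃ t : ℕ, 1 ≤ t ∧ t ≤ g / 2 ∧ v = q (2 * t)} ∪
      {v | ∃ t : ℕ, 1 ≤ t ∧ t ≤ g / 2 ∧ v = o (2 * t)}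

end CurveSystem

namespace CurveSystem

/-- The full finite set of curves `C = C₁ ∪ C₂ ∪ C₃ ∪ C₄ ∪ C₅ ∪ C₆` of the paper's
Figures 3–8. -/
def Call (S : CurveSystem) (g n : ℕ) (a : ℕ → S.Vertex) (A B : ℕ → ℕ → S.Vertex)
    (w r c d u v k p e l r' y s : ℕ → S.Vertex) (l0 l1 dn1 : S.Vertex)
    (p6 : ℕ → ℕ → S.Vertex) (q6 o6 : ℕ → S.Vertex) : Set S.Vertex :=
  IKset S g n a A B ∪ C2set S g n w r ∪ C3set S g c d u v ∪
    C4set S g k p e l r' y s ∪ C5set S n l0 l1 dn1 ∪ C6set S g n p6 q6 o6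

/-- The generating set `G₁` of `Mod_N` for even genus `g` (Theorems 8 and 9 of the
paper): for `g = 2` it is `{t_{c₁}, σ₁, …, σ_{n-1}, y, ξ₁, ξ₂}`, and for
`g = 2r + 2 ≥ 4` it is `{t_{c_i} (i ≤ g-1), t_{s_i} (i ≤ r), t_{z_i} (i ≤ r+1),
t_{d_i} (i ≤ n-1), σ₁, …, σ_{n-1}, y, ξ₁, ξ₂}` (note `r = g/2 - 1`, `r + 1 = g/2`). -/
def G1set (S : CurveSystem) (g n : ℕ) (tc ts tz td σ : ℕ → S.MCG) (y ξ1 ξ2 : S.MCG) :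
    Set S.MCG :=
  if g = 2 then {tc 1} ∪ σ '' Set.Icc 1 (n - 1) ∪ {y, ξ1, ξ2}
  else
    tc '' Set.Icc 1 (g - 1) ∪ ts '' Set.Icc 1 (g / 2 - 1) ∪ tz '' Set.Icc 1 (g / 2) ∪
      td '' Set.Icc 1 (n - 1) ∪ σ '' Set.Icc 1 (n - 1) ∪ {y, ξ1, ξ2}

/-- The generating set `G₂` of `Mod_N` for odd genus `g` (Theorems 11 and 12 of the
paper): for `g = 1` it is `{σ₁, …, σ_{n-1}, ξ₁}`, and for `g = 2r + 1 ≥ 3` it is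
`{t_{c_i} (i ≤ g-1), t_{s_i} (i ≤ r), t_{z_i} (i ≤ r), t_{d_i} (i ≤ n-1),
σ₁, …, σ_{n-1}, y, ξ₁}` (note `r = g/2`). -/
def G2set (S : CurveSystem) (g n : ℕ) (tc ts tz td σ : ℕ → S.MCG) (y ξ1 : S.MCG) :
    Set S.MCG :=
  if g = 1 then σ '' Set.Icc 1 (n - 1) ∪ {ξ1}
  else
    tc '' Set.Icc 1 (g - 1) ∪ ts '' Set.Icc 1 (g / 2) ∪ tz '' Set.Icc 1 (g / 2) ∪
      td '' Set.Icc 1 (n - 1) ∪ σ '' Set.Icc 1 (n - 1) ∪ {y, ξ1}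

/-- The increasing sequence `Z₁ = C`, `Z_k = Z_{k-1} ∪ ⋃_{f ∈ G} (f(Z_{k-1}) ∪
f⁻¹(Z_{k-1}))` for `k ≥ 2` (indexed here by `k : ℕ` starting at `0`). -/
def Zseq (S : CurveSystem) (C : Set S.Vertex) (G : Set S.MCG) : ℕ → Set S.Vertex
  | 0 => C
  | k + 1 => Zseq S C G k ∪ ⋃ f ∈ G, (S.act f '' Zseq S C G k ∪ S.act f⁻¹ '' Zseq S C G k)

end CurveSystem

namespace CurveSystem

variable (S : CurveSystem)

lemma act_inv_act (f : S.MCG) (v : S.Vertex) : S.act f⁻¹ (S.act f v) = v := by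
  rw [← S.act_mul, inv_mul_cancel, S.act_one]

lemma act_act_inv (f : S.MCG) (v : S.Vertex) : S.act f (S.act f⁻¹ v) = v := by
  rw [← S.act_mul, mul_inv_cancel, S.act_one]

lemma act_injective (f : S.MCG) : Function.Injective (S.act f) := by
  intro a b h
  have := congrArg (S.act f⁻¹) h
  simpa [S.act_inv_act] using this

/-- Key inductive step: superrigidity propagates from `Z` to
`Z ∪ ⋃_{f ∈ G} (f(Z) ∪ f⁻¹(Z))`. -/
lemma step_superrigid (C Z : Set S.Vertex) (G : Set S.MCG)
    (hCZ : C ⊆ Z) (hZsr : S.Superrigid Z)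
    (hLf : ∀ f ∈ G, ∃ L : Set S.Vertex,
      L ⊆ C ∧ S.TrivialPointwiseStabilizer L ∧ S.act f '' L ⊆ C) :
    S.Superrigid (Z ∪ ⋃ f ∈ G, (S.act f '' Z ∪ S.act f⁻¹ '' Z)) := by
  intro l hs hsi
  set Z' : Set S.Vertex := Z ∪ ⋃ f ∈ G, (S.act f '' Z ∪ S.act f⁻¹ '' Z) with hZ'
  have hZZ' : Z ⊆ Z' := Set.subset_union_left
  -- sub-lemma: for any τ with act τ '' Z ⊆ Z', the map l ∘ act τ is induced on Z
  have sub : ∀ τ : S.MCG, S.act τ '' Z ⊆ Z' →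
      ∃ hτ : S.MCG, ∀ v ∈ Z, S.act hτ v = l (S.act τ v) := by
    intro τ hτZ
    have hsimp : S.SimplicialOn Z (fun x => l (S.act τ x)) := by
      intro a ha b hb hne hint
      exact hs _ (hτZ ⟨a, ha, rfl⟩) _ (hτZ ⟨b, hb, rfl⟩)
        (fun hh => hne (S.act_injective τ hh)) (by rw [S.act_inter]; exact hint)
    have hsuper : S.SuperinjectiveOn Z (fun x => l (S.act τ x)) := by
      intro a ha b hb hint
      exact hsi _ (hτZ ⟨a, ha, rfl⟩) _ (hτZ ⟨b, hb, rfl⟩)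
        (by rw [S.act_inter]; exact hint)
    exact hZsr _ hsimp hsuper
  -- the base homeomorphism h inducing l on Z
  obtain ⟨h, hh⟩ := sub 1 (by
    intro x hx
    obtain ⟨v, hv, rfl⟩ := hx
    rw [S.act_one]; exact hZZ' hv)
  have hhZ : ∀ v ∈ Z, S.act h v = l v := by
    intro v hv
    have := hh v hv
    rwa [S.act_one] at this
  refine ⟨h, ?_⟩
  intro v hv
  rcases hv with hv | hv
  · exact hhZ v hv
  · simp only [Set.mem_iUnion] at hv
    obtain ⟨f, hf, hv⟩ := hv
    obtain ⟨L, hLC, hLtriv, hfLC⟩ := hLf f hf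
    have hfZ : S.act f '' Z ⊆ Z' := by
      intro x hx
      exact Set.subset_union_right (Set.mem_biUnion hf (Or.inl hx))
    have hfiZ : S.act f⁻¹ '' Z ⊆ Z' := by
      intro x hx
      exact Set.subset_union_right (Set.mem_biUnion hf (Or.inr hx))
    rcases hv with hv | hv
    · -- v ∈ f(Z)
      obtain ⟨x, hx, rfl⟩ := hv
      obtain ⟨hf', hhf⟩ := sub f hfZ
      -- show hf' = h * f using L
      have heq : h * f = hf' := by
        have : ∀ w ∈ L, S.act ((h * f)⁻¹ * hf') w = w := by
          intro w hw
          have h1 : S.act hf' w = l (S.act f w) := hhf w (hLC hw |> hCZ)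
          have h2 : l (S.act f w) = S.act h (S.act f w) :=
            (hhZ _ (hCZ (hfLC ⟨w, hw, rfl⟩))).symm
          rw [S.act_mul, h1, h2, ← S.act_mul h f w]
          exact S.act_inv_act _ _
        have := hLtriv _ this
        have h3 : (h * f)⁻¹ * hf' = 1 := this
        calc h * f = (h * f) * ((h * f)⁻¹ * hf') := by rw [h3, mul_one]
          _ = hf' := by group
      have := hhf x hx
      rw [← heq, S.act_mul] at this
      exact this.symm ▸ this
    · -- v ∈ f⁻¹(Z)
      obtain ⟨x, hx, rfl⟩ := hv
      obtain ⟨h', hh'⟩ := sub f⁻¹ hfiZ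
      have heq : h' * f = h := by
        have : ∀ w ∈ L, S.act (h⁻¹ * (h' * f)) w = w := by
          intro w hw
          have hfw : S.act f w ∈ Z := hCZ (hfLC ⟨w, hw, rfl⟩)
          have h1 : S.act h' (S.act f w) = l w := by
            have := hh' (S.act f w) hfw
            rwa [S.act_inv_act] at this
          have h2 : l w = S.act h w := (hhZ w (hCZ (hLC hw))).symm
          rw [S.act_mul, S.act_mul, h1, h2, ← S.act_mul, inv_mul_cancel, S.act_one]
        have h3 : h⁻¹ * (h' * f) = 1 := hLtriv _ this
        calc h' * f = h * (h⁻¹ * (h' * f)) := by group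
          _ = h := by rw [h3, mul_one]
      have := hh' x hx
      rw [show S.act h' x = S.act (h' * f) (S.act f⁻¹ x) by
        rw [S.act_mul, S.act_act_inv], heq] at this
      exact this

end CurveSystem

/-- Let `N` be a compact, connected, nonorientable surface of genus
`g` with `n` boundary components, `g + n ≥ 5`, `g` odd.  Let `C = C₁ ∪ ⋯ ∪ C₆` be the
finite superrigid set with trivial pointwise stabilizer constructed in the paper
(hypotheses `hCfin`, `hCsr`, `hCtriv`), which contains a curve of every topological
type (hypothesis `horb`), and let `G₂` be the stated generating set of `Mod_N`
(hypothesis `hgen`; for each `f ∈ G₂` there is `L_f ⊆ C` with trivial pointwise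
stabilizer and `f(L_f) ⊆ C`, hypothesis `hLf`).  Define `Z₁ = C` and
`Z_k = Z_{k-1} ∪ ⋃_{f ∈ G₂} (f(Z_{k-1}) ∪ f⁻¹(Z_{k-1}))` for `k ≥ 2`.  Then each
`Z_k` is a finite superrigid set in `C(N)` with trivial pointwise stabilizer in
`Mod_N`, `Z₁ ⊆ Z₂ ⊆ ⋯`, and `⋃_k Z_k = C(N)`. -/
theorem exhaustion_odd_genus
    (g n : ℕ) (hgn : 5 ≤ g + n) (hgodd : Odd g) (S : CurveSystem)
    (a : ℕ → S.Vertex) (A B : ℕ → ℕ → S.Vertex)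
    (w r c d u v k p e l r' y' s : ℕ → S.Vertex) (l0 l1 dn1 : S.Vertex)
    (p6 : ℕ → ℕ → S.Vertex) (q6 o6 : ℕ → S.Vertex)
    (tc ts tz td σ : ℕ → S.MCG) (y ξ1 : S.MCG)
    (C : Set S.Vertex)
    (hC : C = CurveSystem.Call S g n a A B w r c d u v k p e l r' y' s l0 l1 dn1 p6 q6 o6)
    (G : Set S.MCG)
    (hG : G = CurveSystem.G2set S g n tc ts tz td σ y ξ1)
    (hCfin : C.Finite) (hCsr : S.Superrigid C) (hCtriv : S.TrivialPointwiseStabilizer C)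
    (horb : ∀ x : S.Vertex, ∃ f : S.MCG, ∃ v ∈ C, S.act f v = x)
    (hgen : Subgroup.closure G = ⊤)
    (hLf : ∀ f ∈ G, ∃ L : Set S.Vertex,
      L ⊆ C ∧ S.TrivialPointwiseStabilizer L ∧ S.act f '' L ⊆ C) :
    (∀ m : ℕ, (CurveSystem.Zseq S C G m).Finite ∧
      S.Superrigid (CurveSystem.Zseq S C G m) ∧
      S.TrivialPointwiseStabilizer (CurveSystem.Zseq S C G m)) ∧
    (∀ m : ℕ, CurveSystem.Zseq S C G m ⊆ CurveSystem.Zseq S C G (m + 1)) ∧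
    (⋃ m : ℕ, CurveSystem.Zseq S C G m) = Set.univ := by
  classical
  -- G is finite
  have hGfin : G.Finite := by
    rw [hG]
    unfold CurveSystem.G2set
    split
    · exact (((Set.finite_Icc 1 (n - 1)).image σ).union (Set.finite_singleton _))
    · refine Set.Finite.union ?_ ((Set.finite_singleton ξ1).insert y)
      exact (((((Set.finite_Icc 1 (g - 1)).image tc).union
        ((Set.finite_Icc 1 (g / 2)).image ts)).union
        ((Set.finite_Icc 1 (g / 2)).image tz)).union
        ((Set.finite_Icc 1 (n - 1)).image td)).union
        ((Set.finite_Icc 1 (n - 1)).image σ)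
  -- monotonicity
  have hmono : ∀ m : ℕ, CurveSystem.Zseq S C G m ⊆ CurveSystem.Zseq S C G (m + 1) := by
    intro m
    exact Set.subset_union_left
  have hCsub : ∀ m : ℕ, C ⊆ CurveSystem.Zseq S C G m := by
    intro m
    induction m with
    | zero => exact subset_rfl
    | succ k ih => exact ih.trans (hmono k)
  -- main induction: finiteness, superrigidity, trivial stabilizer
  have hmain : ∀ m : ℕ, (CurveSystem.Zseq S C G m).Finite ∧
      S.Superrigid (CurveSystem.Zseq S C G m) ∧
      S.TrivialPointwiseStabilizer (CurveSystem.Zseq S C G m) := by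
    intro m
    induction m with
    | zero => exact ⟨hCfin, hCsr, hCtriv⟩
    | succ k ih =>
      obtain ⟨hfin, hsr, _⟩ := ih
      refine ⟨?_, ?_, ?_⟩
      · exact hfin.union (hGfin.biUnion fun f _ => (hfin.image _).union (hfin.image _))
      · exact S.step_superrigid C _ G (hCsub k) hsr hLf
      · intro f hf
        exact hCtriv f fun v hv => hf v (hCsub (k + 1) hv)
  refine ⟨hmain, hmono, ?_⟩
  -- exhaustion
  rw [Set.eq_univ_iff_forall]
  intro x
  simp only [Set.mem_iUnion]
  -- every element of the closure moves Z-elements within the Z-filtration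
  have key : ∀ f ∈ Subgroup.closure G,
      ∀ x : S.Vertex, (∃ m, x ∈ CurveSystem.Zseq S C G m) →
        (∃ m, S.act f x ∈ CurveSystem.Zseq S C G m) ∧
        (∃ m, S.act f⁻¹ x ∈ CurveSystem.Zseq S C G m) := by
    intro f hf
    induction hf using Subgroup.closure_induction with
    | mem g hg =>
      intro x ⟨m, hm⟩
      constructor
      · exact ⟨m + 1, Or.inr (Set.mem_biUnion hg (Or.inl ⟨x, hm, rfl⟩))⟩
      · exact ⟨m + 1, Or.inr (Set.mem_biUnion hg (Or.inr ⟨x, hm, rfl⟩))⟩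
    | one =>
      intro x hx
      simpa [S.act_one] using And.intro hx hx
    | mul a b _ _ ha hb =>
      intro x hx
      constructor
      · obtain ⟨m1, hm1⟩ := (hb x hx).1
        obtain ⟨m2, hm2⟩ := (ha _ ⟨m1, hm1⟩).1
        exact ⟨m2, by rwa [S.act_mul]⟩
      · obtain ⟨m1, hm1⟩ := (ha x hx).2
        obtain ⟨m2, hm2⟩ := (hb _ ⟨m1, hm1⟩).2
        exact ⟨m2, by rwa [mul_inv_rev, S.act_mul]⟩
    | inv a _ ha =>
      intro x hx
      refine ⟨(ha x hx).2, ?_⟩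
      simpa [inv_inv] using (ha x hx).1
  obtain ⟨f, v, hv, hfv⟩ := horb x
  have hfmem : f ∈ Subgroup.closure G := by rw [hgen]; trivial
  obtain ⟨⟨m, hm⟩, -⟩ := key f hfmem v ⟨0, hv⟩
  exact ⟨m, by rwa [hfv] at hm⟩
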